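/- Let X be a transitive d-dimensional shift of maximality type 0 (it has no maximal subsystem). Then X is an isolated point of the space T^d of transitive d-dimensional shifts if and only if X is a minimal shift of finite type. -/

import Mathlib

/-- The group `ℤ^d`. -/
abbrev ZD (d : ℕ) := Fin d → ℤ

/-- A configuration is a map `ℤ^d → ℤ`. -/
abbrev Config (d : ℕ) := ZD d → ℤ

/-- The shift map `σ^u`, defined by `σ^u(x)_v = x_{u+v}`. -/
def shiftMap {d : ℕ} (u : ZD d) (x : Config d) : Config d := fun v => x (u + v)

/-- The sup norm `‖·‖_∞` on `ℤ^d`, valued in `ℕ`. -/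
def normInf {d : ℕ} (n : ZD d) : ℕ := Finset.univ.sup fun i => (n i).natAbs

open Classical in
/-- The metric `δ` on configurations: `δ(x,y) = 2^{-min{‖n‖_∞ : x_n ≠ y_n}}`, `δ(x,x) = 0`. -/
noncomputable def deltaDist {d : ℕ} (x y : Config d) : ℝ :=
  if x = y then 0
  else (2 : ℝ) ^ (-((sInf {m : ℕ | ∃ n : ZD d, normInf n = m ∧ x n ≠ y n} : ℕ) : ℤ))

/-- The closure of a set of configurations with respect to the metric `δ`. -/
def deltaClosure {d : ℕ} (A : Set (Config d)) : Set (Config d) :=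
  {x | ∀ ε : ℝ, 0 < ε → ∃ a ∈ A, deltaDist x a < ε}

/-- A set of configurations is closed for `δ` when it contains all its limit points. -/
def IsDeltaClosed {d : ℕ} (A : Set (Config d)) : Prop := deltaClosure A ⊆ A

/-- A `d`-dimensional shift: a nonempty set of configurations over a common finite
alphabet, closed for `δ` and invariant under every shift map. -/
def IsShift {d : ℕ} (X : Set (Config d)) : Prop :=
  X.Nonempty ∧ (∃ A : Finset ℤ, ∀ x ∈ X, ∀ v : ZD d, x v ∈ A) ∧ IsDeltaClosed X ∧
    ∀ u : ZD d, ∀ x ∈ X, shiftMap u x ∈ X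

/-- The Hausdorff metric `δ_H` on the space of shifts. -/
noncomputable def deltaH {d : ℕ} (X Z : Set (Config d)) : ℝ :=
  max (⨆ x : X, ⨅ z : Z, deltaDist (x : Config d) (z : Config d))
      (⨆ z : Z, ⨅ x : X, deltaDist (x : Config d) (z : Config d))

/-- A subsystem of a shift `X`: a nonempty closed shift-invariant subset of `X`. -/
def IsSubsystem {d : ℕ} (Z X : Set (Config d)) : Prop :=
  Z.Nonempty ∧ Z ⊆ X ∧ IsDeltaClosed Z ∧ ∀ u : ZD d, ∀ z ∈ Z, shiftMap u z ∈ Z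

/-- A maximal subsystem of `X`: a proper subsystem such that any subsystem strictly
between it and `X` equals `X`. -/
def IsMaximalSubsystem {d : ℕ} (Z X : Set (Config d)) : Prop :=
  IsSubsystem Z X ∧ Z ≠ X ∧ ∀ Z', IsSubsystem Z' X → Z ⊂ Z' → Z' = X

/-- An outcast of `X`: a proper subsystem contained in no maximal subsystem of `X`. -/
def IsOutcast {d : ℕ} (Z X : Set (Config d)) : Prop :=
  IsSubsystem Z X ∧ Z ≠ X ∧ ∀ M, IsMaximalSubsystem M X → ¬ Z ⊆ M

/-- A pattern with finite support `U` (given by the values of `p` on `U`) appears in the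
configuration `x`. -/
def PatternAppears {d : ℕ} (U : Finset (ZD d)) (p : ZD d → ℤ) (x : Config d) : Prop :=
  ∃ u : ZD d, ∀ v ∈ U, x (u + v) = p v

/-- The set of configurations over the alphabet `A` avoiding every pattern in `F`. -/
def XofF {d : ℕ} (A : Finset ℤ) (F : Set (Finset (ZD d) × (ZD d → ℤ))) : Set (Config d) :=
  {x | (∀ v : ZD d, x v ∈ A) ∧ ∀ q ∈ F, ¬ PatternAppears q.1 q.2 x}

/-- A shift of finite type: defined by a finite alphabet and a finite set of forbidden
patterns. -/
def IsSFT {d : ℕ} (X : Set (Config d)) : Prop :=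
  ∃ (A : Finset ℤ) (F : Finset (Finset (ZD d) × (ZD d → ℤ))), X = XofF A (F : Set _)

/-- `X` is an isolated point of the subspace `S` (with the Hausdorff metric `δ_H`). -/
def IsolatedIn {d : ℕ} (S : Set (Set (Config d))) (X : Set (Config d)) : Prop :=
  X ∈ S ∧ ∃ ε : ℝ, 0 < ε ∧ ∀ Z ∈ S, deltaH X Z < ε → Z = X

/-- The orbit of a configuration under the shift action. -/
def orbit {d : ℕ} (x : Config d) : Set (Config d) := {y | ∃ u : ZD d, y = shiftMap u x}

/-- A shift is transitive when some point has dense orbit. -/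
def IsTransitive {d : ℕ} (X : Set (Config d)) : Prop :=
  IsShift X ∧ ∃ x ∈ X, X ⊆ deltaClosure (orbit x)

/-- A shift is minimal when its only subsystem is itself. -/
def IsMinimalShift {d : ℕ} (X : Set (Config d)) : Prop :=
  IsShift X ∧ ∀ Z, IsSubsystem Z X → Z = X

/-!
If `X` is isolated among transitive shifts, some radius `N` pins it down: a transitive shift whose
`N`-windows all occur in `X` and which contains every `N`-window of `X` is `X` itself. By
compactness, a point with dense orbit exhibits all `N`-windows of `X` within a bounded distance
`M` of the origin, so any configuration agreeing with it on the cube of radius `M + N` generates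
`X`. Without maximal subsystems, the points of proper subsystems are dense in a non-minimal `X`
(otherwise their closure would be a maximal subsystem), so such a configuration could be chosen
inside a proper subsystem, which is absurd; hence `X` is minimal. In a minimal shift every point
has dense orbit, so a configuration whose `(M + N)`-windows all occur in `X` lies in `X`, and
forbidding the finitely many other `(M + N)`-patterns shows that `X` is of finite type.
Conversely, a shift close to a minimal shift of finite type avoids its forbidden patterns, so it
is a subsystem of it and hence equal to it.
-/

variable {d : ℕ}

section Agree

def Agree (k : ℕ) (x y : Config d) : Prop :=
  ∀ v : ZD d, normInf v ≤ k → x v = y v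

theorem agree_refl (k : ℕ) (x : Config d) : Agree k x x := fun _ _ => rfl

variable {k : ℕ} {x y z : Config d}

theorem Agree.symm (h : Agree k x y) : Agree k y x := fun v hv => (h v hv).symm

theorem Agree.trans (h₁ : Agree k x y) (h₂ : Agree k y z) : Agree k x z :=
  fun v hv => (h₁ v hv).trans (h₂ v hv)

theorem Agree.mono {k' : ℕ} (h : Agree k' x y) (hk : k ≤ k') : Agree k x y :=
  fun v hv => h v (hv.trans hk)

theorem normInf_zero : normInf (0 : ZD d) = 0 := by
  simp [normInf]

theorem normInf_add_le (u v : ZD d) : normInf (u + v) ≤ normInf u + normInf v :=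
  Finset.sup_le fun i _ => (Int.natAbs_add_le _ _).trans <|
    add_le_add (Finset.le_sup (f := fun j => (u j).natAbs) (Finset.mem_univ i))
      (Finset.le_sup (f := fun j => (v j).natAbs) (Finset.mem_univ i))

@[simp]
theorem shiftMap_apply (u v : ZD d) (x : Config d) : shiftMap u x v = x (u + v) := rfl

@[simp]
theorem shiftMap_zero (x : Config d) : shiftMap 0 x = x :=
  funext fun v => by simp

theorem shiftMap_shiftMap (u v : ZD d) (x : Config d) :
    shiftMap u (shiftMap v x) = shiftMap (v + u) x :=
  funext fun w => by simp [add_assoc]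

theorem Agree.shift {u : ZD d} (h : Agree (normInf u + k) x y) :
    Agree k (shiftMap u x) (shiftMap u y) :=
  fun v hv => h (u + v) ((normInf_add_le u v).trans (by omega))

theorem Agree.apply_zero (h : Agree k x y) : x 0 = y 0 :=
  h 0 (by simp [normInf_zero])

end Agree

section Metric

variable {k : ℕ} {x y : Config d}

theorem deltaDist_nonneg (x y : Config d) : 0 ≤ deltaDist x y := by
  unfold deltaDist; split_ifs <;> positivity

theorem deltaDist_le_one (x y : Config d) : deltaDist x y ≤ 1 := by
  unfold deltaDist; split_ifs
  · exact zero_le_one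
  · exact zpow_le_one_of_nonpos₀ one_le_two (by omega)

theorem agree_of_deltaDist_lt (h : deltaDist x y < 2 ^ (-(k : ℤ))) : Agree k x y := by
  intro v hv
  by_contra hne
  have hxy : x ≠ y := fun h => hne (congrFun h v)
  rw [deltaDist, if_neg hxy] at h
  have hlt := (zpow_lt_zpow_iff_right₀ (one_lt_two (α := ℝ))).mp h
  have hle : sInf {m | ∃ n : ZD d, normInf n = m ∧ x n ≠ y n} ≤ normInf v :=
    Nat.sInf_le ⟨v, rfl, hne⟩
  omega

theorem deltaDist_le_of_agree (h : Agree k x y) : deltaDist x y ≤ 2 ^ (-(k : ℤ) - 1) := by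
  by_cases hxy : x = y
  · rw [deltaDist, if_pos hxy]; positivity
  rw [deltaDist, if_neg hxy]
  obtain ⟨n, hn⟩ := Function.ne_iff.mp hxy
  obtain ⟨v, hv, hne⟩ := Nat.sInf_mem
    (⟨_, n, rfl, hn⟩ : {m | ∃ n : ZD d, normInf n = m ∧ x n ≠ y n}.Nonempty)
  have hk : k < normInf v := lt_of_not_ge fun hle => hne (h v hle)
  exact zpow_le_zpow_right₀ one_le_two (by omega)

theorem deltaDist_lt_of_agree (h : Agree k x y) : deltaDist x y < 2 ^ (-(k : ℤ)) :=
  (deltaDist_le_of_agree h).trans_lt (zpow_lt_zpow_right₀ one_lt_two (by omega))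

theorem exists_two_zpow_lt {ε : ℝ} (hε : 0 < ε) :
    ∃ k : ℕ, (2 : ℝ) ^ (-(k : ℤ)) < ε := by
  obtain ⟨k, hk⟩ := exists_pow_lt_of_lt_one hε one_half_lt_one
  exact ⟨k, by simpa [zpow_neg, zpow_natCast, inv_pow] using hk⟩

theorem mem_deltaClosure_iff {A : Set (Config d)} :
    x ∈ deltaClosure A ↔ ∀ k : ℕ, ∃ a ∈ A, Agree k x a := by
  refine ⟨fun hx k => ?_, fun hx ε hε => ?_⟩
  · obtain ⟨a, ha, hxa⟩ := hx _ (zpow_pos two_pos (-(k : ℤ)))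
    exact ⟨a, ha, agree_of_deltaDist_lt hxa⟩
  · obtain ⟨k, hk⟩ := exists_two_zpow_lt hε
    obtain ⟨a, ha, hxa⟩ := hx k
    exact ⟨a, ha, (deltaDist_lt_of_agree hxa).trans hk⟩

end Metric

section Hausdorff

variable {k : ℕ} {X Z : Set (Config d)}

theorem deltaH_lt_of_agree (hXZ : ∀ x ∈ X, ∃ z ∈ Z, Agree k x z)
    (hZX : ∀ z ∈ Z, ∃ x ∈ X, Agree k x z) : deltaH X Z < 2 ^ (-(k : ℤ)) := by
  have hB : (0 : ℝ) ≤ 2 ^ (-(k : ℤ) - 1) := by positivity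
  have hbdd : ∀ S : Set (Config d), ∀ f : S → ℝ, (∀ s, 0 ≤ f s) →
      BddBelow (Set.range f) :=
    fun S f hf => ⟨0, Set.forall_mem_range.2 hf⟩
  refine lt_of_le_of_lt (max_le (Real.iSup_le (fun x => ?_) hB) (Real.iSup_le (fun z => ?_) hB))
    (zpow_lt_zpow_right₀ one_lt_two (by omega))
  · obtain ⟨z, hz, hxz⟩ := hXZ x x.2
    exact ciInf_le_of_le (hbdd Z _ fun _ => deltaDist_nonneg _ _) ⟨z, hz⟩
      (deltaDist_le_of_agree hxz)
  · obtain ⟨x, hx, hxz⟩ := hZX z z.2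
    exact ciInf_le_of_le (hbdd X _ fun _ => deltaDist_nonneg _ _) ⟨x, hx⟩
      (deltaDist_le_of_agree hxz)

-- Without `X.Nonempty` this fails: an infimum over the empty type is the junk value `0`.
theorem exists_agree_of_deltaH_lt (hX : X.Nonempty) (h : deltaH X Z < 2 ^ (-(k : ℤ)))
    {z : Config d} (hz : z ∈ Z) : ∃ x ∈ X, Agree k x z := by
  have : Nonempty X := hX.to_subtype
  have hbdd : ∀ z' : Config d, BddBelow (Set.range fun x : X => deltaDist (x : Config d) z') :=
    fun _ => ⟨0, Set.forall_mem_range.2 fun _ => deltaDist_nonneg _ _⟩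
  have hinf : ⨅ x : X, deltaDist (x : Config d) z < 2 ^ (-(k : ℤ)) := by
    refine lt_of_le_of_lt ?_ ((le_max_right _ _).trans_lt h)
    refine le_ciSup (f := fun z : Z => ⨅ x : X, deltaDist (x : Config d) z)
      ⟨1, Set.forall_mem_range.2 fun _ => ?_⟩ ⟨z, hz⟩
    exact ciInf_le_of_le (hbdd _) (Classical.arbitrary X) (deltaDist_le_one _ _)
  obtain ⟨x, hx⟩ := exists_lt_of_ciInf_lt hinf
  exact ⟨x, x.2, agree_of_deltaDist_lt hx⟩

end Hausdorff

section Topology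

noncomputable def cubeF (d k : ℕ) : Finset (ZD d) :=
  Fintype.piFinset fun _ => Finset.Icc (-(k : ℤ)) k

theorem mem_cubeF {k : ℕ} {v : ZD d} : v ∈ cubeF d k ↔ normInf v ≤ k := by
  simp only [cubeF, Fintype.mem_piFinset, Finset.mem_Icc, normInf, Finset.sup_le_iff,
    Finset.mem_univ, true_implies]
  exact forall_congr' fun i => by omega

theorem isOpen_setOf_agree (k : ℕ) : IsOpen {p : Config d × Config d | Agree k p.1 p.2} := by
  have hcube : {p : Config d × Config d | Agree k p.1 p.2}
      = ⋂ v ∈ cubeF d k,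
          (fun p : Config d × Config d => (p.1 v, p.2 v)) ⁻¹' Set.diagonal ℤ := by
    ext p
    simp [Agree, mem_cubeF]
  rw [hcube]
  exact isOpen_biInter_finset fun v _ => (isOpen_discrete _).preimage (by fun_prop)

theorem continuous_shiftMap (u : ZD d) : Continuous (shiftMap u) :=
  continuous_pi fun v => continuous_apply (u + v)

theorem isClosed_of_isDeltaClosed {A : Set (Config d)} (hA : IsDeltaClosed A) : IsClosed A := by
  refine isClosed_of_closure_subset fun x hx => hA (mem_deltaClosure_iff.2 fun k => ?_)
  have hU : IsOpen {y : Config d | Agree k x y} :=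
    (isOpen_setOf_agree k).preimage (Continuous.prodMk_right x)
  obtain ⟨a, hxa, ha⟩ := mem_closure_iff.1 hx _ hU (agree_refl k x)
  exact ⟨a, ha, hxa⟩

theorem IsShift.isCompact {X : Set (Config d)} (hX : IsShift X) : IsCompact X := by
  obtain ⟨-, ⟨A, hA⟩, hcl, -⟩ := hX
  have hAc : IsCompact (Set.univ.pi fun _ : ZD d => (A : Set ℤ)) :=
    isCompact_univ_pi fun _ => A.finite_toSet.isCompact
  exact hAc.of_isClosed_subset (isClosed_of_isDeltaClosed hcl)
    fun x hx => Set.mem_univ_pi.2 (hA x hx)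

theorem exists_bound_of_isCompact {X Y : Set (Config d)} {N : ℕ} (hX : IsCompact X)
    (hY : IsCompact Y) (h : ∀ x ∈ X, ∀ y ∈ Y, ∃ u : ZD d, Agree N (shiftMap u x) y) :
    ∃ M : ℕ, ∀ x ∈ X, ∀ y ∈ Y,
      ∃ u : ZD d, normInf u ≤ M ∧ Agree N (shiftMap u x) y := by
  have hopen : ∀ u : ZD d, IsOpen {p : Config d × Config d | Agree N (shiftMap u p.1) p.2} :=
    fun u => (isOpen_setOf_agree N).preimage
      (((continuous_shiftMap u).comp continuous_fst).prodMk continuous_snd)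
  obtain ⟨t, ht⟩ := (hX.prod hY).elim_finite_subcover _ hopen fun p hp => by
    simpa using h p.1 hp.1 p.2 hp.2
  refine ⟨t.sup normInf, fun x hx y hy => ?_⟩
  obtain ⟨u, hu, hxy⟩ := Set.mem_iUnion₂.1 (ht (Set.mk_mem_prod hx hy))
  exact ⟨u, Finset.le_sup hu, hxy⟩

end Topology

section Closure

variable {A B : Set (Config d)} {x y : Config d}

theorem subset_deltaClosure (A : Set (Config d)) : A ⊆ deltaClosure A :=
  fun a ha => mem_deltaClosure_iff.2 fun _ => ⟨a, ha, agree_refl _ _⟩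

theorem isDeltaClosed_deltaClosure (A : Set (Config d)) : IsDeltaClosed (deltaClosure A) := by
  intro x hx
  refine mem_deltaClosure_iff.2 fun k => ?_
  obtain ⟨b, hb, hxb⟩ := mem_deltaClosure_iff.1 hx k
  obtain ⟨a, ha, hba⟩ := mem_deltaClosure_iff.1 hb k
  exact ⟨a, ha, hxb.trans hba⟩

theorem deltaClosure_subset (hB : IsDeltaClosed B) (h : A ⊆ B) : deltaClosure A ⊆ B :=
  fun _ hx => hB fun ε hε => (hx ε hε).imp fun _ ha => ⟨h ha.1, ha.2⟩

theorem shiftMap_mem_deltaClosure (hA : ∀ u : ZD d, ∀ a ∈ A, shiftMap u a ∈ A) :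
    ∀ u : ZD d, ∀ x ∈ deltaClosure A, shiftMap u x ∈ deltaClosure A := by
  intro u x hx
  refine mem_deltaClosure_iff.2 fun k => ?_
  obtain ⟨a, ha, hxa⟩ := mem_deltaClosure_iff.1 hx (normInf u + k)
  exact ⟨shiftMap u a, hA u a ha, hxa.shift⟩

theorem apply_mem_of_mem_deltaClosure {S : Finset ℤ} (hA : ∀ a ∈ A, ∀ v, a v ∈ S)
    (hx : x ∈ deltaClosure A) (v : ZD d) : x v ∈ S := by
  obtain ⟨a, ha, hxa⟩ := mem_deltaClosure_iff.1 hx (normInf v)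
  rw [hxa v le_rfl]
  exact hA a ha v

theorem self_mem_orbit (x : Config d) : x ∈ orbit x := ⟨0, (shiftMap_zero x).symm⟩

theorem shiftMap_mem_orbit (u : ZD d) (hy : y ∈ orbit x) : shiftMap u y ∈ orbit x := by
  obtain ⟨u', rfl⟩ := hy
  exact ⟨u' + u, shiftMap_shiftMap u u' x⟩

theorem orbit_subset (hA : ∀ u : ZD d, ∀ a ∈ A, shiftMap u a ∈ A) (hx : x ∈ A) :
    orbit x ⊆ A := by
  rintro _ ⟨u, rfl⟩
  exact hA u x hx

theorem exists_shiftMap_agree_of_mem_deltaClosure_orbit (hy : y ∈ deltaClosure (orbit x))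
    (k : ℕ) : ∃ u : ZD d, Agree k (shiftMap u x) y := by
  obtain ⟨_, ⟨u, rfl⟩, hya⟩ := mem_deltaClosure_iff.1 hy k
  exact ⟨u, hya.symm⟩

theorem isTransitive_deltaClosure_orbit {S : Finset ℤ} (hx : ∀ v, x v ∈ S) :
    IsTransitive (deltaClosure (orbit x)) := by
  have hxc := subset_deltaClosure _ (self_mem_orbit x)
  refine ⟨⟨⟨x, hxc⟩, ⟨S, fun y hy => apply_mem_of_mem_deltaClosure ?_ hy⟩,
    isDeltaClosed_deltaClosure _, shiftMap_mem_deltaClosure fun u _ => shiftMap_mem_orbit u⟩,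
    x, hxc, subset_rfl⟩
  rintro _ ⟨u, rfl⟩ v
  exact hx (u + v)

theorem IsShift.isSubsystem_deltaClosure_orbit {X : Set (Config d)} (hX : IsShift X)
    (hx : x ∈ X) : IsSubsystem (deltaClosure (orbit x)) X :=
  ⟨⟨x, subset_deltaClosure _ (self_mem_orbit x)⟩,
    deltaClosure_subset hX.2.2.1 (orbit_subset hX.2.2.2 hx), isDeltaClosed_deltaClosure _,
    shiftMap_mem_deltaClosure fun u _ => shiftMap_mem_orbit u⟩

theorem IsMinimalShift.subset_deltaClosure_orbit {X : Set (Config d)} (hX : IsMinimalShift X)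
    (hx : x ∈ X) : X ⊆ deltaClosure (orbit x) :=
  (hX.2 _ (hX.1.isSubsystem_deltaClosure_orbit hx)).ge

theorem IsMinimalShift.isTransitive {X : Set (Config d)} (hX : IsMinimalShift X) :
    IsTransitive X :=
  ⟨hX.1, hX.1.1.some, hX.1.1.some_mem, hX.subset_deltaClosure_orbit hX.1.1.some_mem⟩

end Closure

theorem subset_deltaClosure_sUnion_proper {X Y : Set (Config d)} (hX : IsShift X)
    (htype : ∀ Z, ¬ IsMaximalSubsystem Z X) (hY : IsSubsystem Y X) (hYX : Y ≠ X) :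
    X ⊆ deltaClosure (⋃₀ {W | IsSubsystem W X ∧ W ≠ X}) := by
  set U := ⋃₀ {W | IsSubsystem W X ∧ W ≠ X}
  by_contra hXU
  obtain ⟨y, hy⟩ := hY.1
  have hUinv : ∀ u : ZD d, ∀ a ∈ U, shiftMap u a ∈ U := by
    rintro u a ⟨W, hW, haW⟩
    exact ⟨W, hW, hW.1.2.2.2 u a haW⟩
  refine htype (deltaClosure U) ⟨⟨⟨y, subset_deltaClosure U ⟨Y, ⟨hY, hYX⟩, hy⟩⟩,
    deltaClosure_subset hX.2.2.1 (Set.sUnion_subset fun W hW => hW.1.2.1),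
    isDeltaClosed_deltaClosure U, shiftMap_mem_deltaClosure hUinv⟩, fun h => hXU h.ge, ?_⟩
  intro Z hZ hUZ
  by_contra hZX
  have hZU : Z ⊆ U :=
    Set.subset_sUnion_of_mem (show Z ∈ {W | IsSubsystem W X ∧ W ≠ X} from ⟨hZ, hZX⟩)
  exact hUZ.2 (hZU.trans (subset_deltaClosure U))

section LocallyIn

def LocallyIn (X : Set (Config d)) (N : ℕ) (z : Config d) : Prop :=
  ∀ u : ZD d, ∃ x ∈ X, Agree N (shiftMap u z) x

variable {X : Set (Config d)} {N : ℕ} {z : Config d}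

theorem LocallyIn.mono {N' : ℕ} (hz : LocallyIn X N' z) (hN : N ≤ N') : LocallyIn X N z :=
  fun u => (hz u).imp fun _ hx => ⟨hx.1, hx.2.mono hN⟩

theorem locallyIn_of_mem (hX : ∀ u : ZD d, ∀ x ∈ X, shiftMap u x ∈ X) (hz : z ∈ X) :
    LocallyIn X N z :=
  fun u => ⟨shiftMap u z, hX u z hz, agree_refl _ _⟩

theorem LocallyIn.apply_mem {S : Finset ℤ} (hz : LocallyIn X N z)
    (hX : ∀ x ∈ X, ∀ v, x v ∈ S) (v : ZD d) : z v ∈ S := by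
  obtain ⟨x, hx, hzx⟩ := hz v
  have hzv : z v = x 0 := by simpa using hzx.apply_zero
  exact hzv ▸ hX x hx 0

end LocallyIn

section FiniteType

variable {k : ℕ} {x y : Config d}

def centralPattern (k : ℕ) (x : Config d) : Config d :=
  fun v => if normInf v ≤ k then x v else 0

theorem centralPattern_eq_iff : centralPattern k x = centralPattern k y ↔ Agree k x y := by
  refine ⟨fun h v hv => by simpa [centralPattern, hv] using congrFun h v,
    fun h => funext fun v => ?_⟩
  unfold centralPattern
  split_ifs with hv
  exacts [h v hv, rfl]

theorem finite_image_centralPattern (S : Finset ℤ) (k : ℕ) :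
    (centralPattern k '' {x : Config d | ∀ v, x v ∈ S}).Finite := by
  classical
  refine (Set.finite_range fun f : cubeF d k → S =>
    fun v => if h : v ∈ cubeF d k then (f ⟨v, h⟩ : ℤ) else 0).subset ?_
  rintro _ ⟨x, hx, rfl⟩
  refine ⟨fun v => ⟨x v, hx v⟩, funext fun v => ?_⟩
  by_cases hv : normInf v ≤ k <;> simp [centralPattern, mem_cubeF, hv]

theorem patternAppears_centralPattern_iff :
    PatternAppears (cubeF d k) (centralPattern k y) x ↔
      ∃ u : ZD d, Agree k (shiftMap u x) y := by
  simp only [PatternAppears, Agree, centralPattern, mem_cubeF, shiftMap_apply]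
  exact exists_congr fun u => forall_congr' fun v => imp_congr_right fun hv => by rw [if_pos hv]

variable {X : Set (Config d)} {N : ℕ}

theorem isSFT_of_locallyIn_imp_mem (hX : IsShift X) (h : ∀ z, LocallyIn X N z → z ∈ X) :
    IsSFT X := by
  classical
  obtain ⟨-, ⟨S, hS⟩, -, hinv⟩ := hX
  let P := centralPattern N '' {x : Config d | ∀ v, x v ∈ S} \ centralPattern N '' X
  have hP : P.Finite := (finite_image_centralPattern S N).sdiff
  refine ⟨S, hP.toFinset.image fun p => (cubeF d N, p), Set.Subset.antisymm ?_ ?_⟩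
  · refine fun x hx => ⟨hS x hx, ?_⟩
    simp only [Finset.coe_image, Set.Finite.coe_toFinset, Set.forall_mem_image]
    rintro _ ⟨⟨a, -, rfl⟩, hnot⟩ happ
    obtain ⟨u, hxa⟩ := patternAppears_centralPattern_iff.1 happ
    exact hnot ⟨shiftMap u x, hinv u x hx, centralPattern_eq_iff.2 hxa⟩
  · rintro z ⟨hzS, hzF⟩
    refine h z fun u => by_contra fun hno => ?_
    have hforbidden : centralPattern N (shiftMap u z) ∈ P :=
      ⟨⟨_, fun v => hzS _, rfl⟩,
        fun ⟨x, hx, hxz⟩ => hno ⟨x, hx, (centralPattern_eq_iff.1 hxz).symm⟩⟩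
    exact hzF _ (Finset.mem_coe.2 (Finset.mem_image_of_mem _ (hP.mem_toFinset.2 hforbidden)))
      (patternAppears_centralPattern_iff.2 ⟨u, agree_refl N _⟩)

theorem IsSFT.exists_locallyIn_imp_mem (hX : IsSFT X) :
    ∃ N : ℕ, ∀ z, LocallyIn X N z → z ∈ X := by
  obtain ⟨S, F, rfl⟩ := hX
  refine ⟨F.sup fun q => q.1.sup normInf, fun z hz =>
    ⟨hz.apply_mem fun x hx => hx.1, fun q hq ⟨u, hu⟩ => ?_⟩⟩
  obtain ⟨x, hx, hzx⟩ := hz u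
  refine hx.2 q hq ⟨0, fun v hv => ?_⟩
  rw [zero_add, ← hzx v ((Finset.le_sup hv).trans
    (Finset.le_sup (f := fun q => q.1.sup normInf) hq))]
  exact hu v hv

end FiniteType

section Isolated

variable {X Y : Set (Config d)}

theorem IsolatedIn.exists_deltaClosure_orbit_eq (hiso : IsolatedIn {Y | IsTransitive Y} X) :
    ∃ N : ℕ, ∀ w : Config d, LocallyIn X N w →
      (∀ y ∈ X, ∃ u : ZD d, Agree N (shiftMap u w) y) → deltaClosure (orbit w) = X := by
  obtain ⟨⟨⟨-, ⟨S, hS⟩, -, -⟩, -⟩, ε, hε, hX⟩ := hiso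
  obtain ⟨N, hN⟩ := exists_two_zpow_lt hε
  refine ⟨N, fun w hloc hpat => hX _ (isTransitive_deltaClosure_orbit (hloc.apply_mem hS))
    ((deltaH_lt_of_agree ?_ ?_).trans hN)⟩
  · intro y hy
    obtain ⟨u, hwy⟩ := hpat y hy
    exact ⟨shiftMap u w, subset_deltaClosure _ ⟨u, rfl⟩, hwy.symm⟩
  · intro z hz
    obtain ⟨_, ⟨u, rfl⟩, hzw⟩ := mem_deltaClosure_iff.1 hz N
    obtain ⟨x, hx, hwx⟩ := hloc u
    exact ⟨x, hx, (hzw.trans hwx).symm⟩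

theorem exists_shiftMap_agree_of_agree {M N : ℕ} {w x : Config d} (hwx : Agree (M + N) w x)
    (hx : ∀ y ∈ Y, ∃ u : ZD d, normInf u ≤ M ∧ Agree N (shiftMap u x) y) :
    ∀ y ∈ Y, ∃ u : ZD d, Agree N (shiftMap u w) y := by
  intro y hy
  obtain ⟨u, hu, hxy⟩ := hx y hy
  exact ⟨u, (hwx.mono (by omega)).shift.trans hxy⟩

theorem IsolatedIn.isMinimalShift (hiso : IsolatedIn {Y | IsTransitive Y} X)
    (htype : ∀ Z, ¬ IsMaximalSubsystem Z X) : IsMinimalShift X := by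
  obtain ⟨N, hN⟩ := hiso.exists_deltaClosure_orbit_eq
  obtain ⟨hX, x₀, hx₀, hdense⟩ := hiso.1
  obtain ⟨M, hM⟩ := exists_bound_of_isCompact isCompact_singleton hX.isCompact
    fun x hx y hy => by
      rw [Set.mem_singleton_iff.1 hx]
      exact exists_shiftMap_agree_of_mem_deltaClosure_orbit (hdense hy) N
  refine ⟨hX, fun Y hY => by_contra fun hYX => ?_⟩
  obtain ⟨w, ⟨W, ⟨hW, hWX⟩, hwW⟩, hx₀w⟩ := mem_deltaClosure_iff.1
    (subset_deltaClosure_sUnion_proper hX htype hY hYX hx₀) (M + N)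
  have hWeq := hN w (locallyIn_of_mem hX.2.2.2 (hW.2.1 hwW))
    (exists_shiftMap_agree_of_agree hx₀w.symm (hM x₀ rfl))
  exact hWX (hW.2.1.antisymm
    (hWeq ▸ deltaClosure_subset hW.2.2.1 (orbit_subset hW.2.2.2 hwW)))

theorem IsolatedIn.isSFT (hiso : IsolatedIn {Y | IsTransitive Y} X) (hmin : IsMinimalShift X) :
    IsSFT X := by
  obtain ⟨N, hN⟩ := hiso.exists_deltaClosure_orbit_eq
  have hX := hmin.1
  obtain ⟨M, hM⟩ := exists_bound_of_isCompact hX.isCompact hX.isCompact fun x hx y hy =>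
    exists_shiftMap_agree_of_mem_deltaClosure_orbit (hmin.subset_deltaClosure_orbit hx hy) N
  refine isSFT_of_locallyIn_imp_mem (N := M + N) hX fun z hz => ?_
  obtain ⟨x, hx, hzx⟩ := hz 0
  rw [shiftMap_zero] at hzx
  rw [← hN z (hz.mono (by omega)) (exists_shiftMap_agree_of_agree hzx (hM x hx))]
  exact subset_deltaClosure _ (self_mem_orbit z)

theorem IsMinimalShift.isolatedIn (hmin : IsMinimalShift X) (hsft : IsSFT X) :
    IsolatedIn {Y | IsTransitive Y} X := by
  obtain ⟨N, hN⟩ := hsft.exists_locallyIn_imp_mem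
  refine ⟨hmin.isTransitive, 2 ^ (-(N : ℤ)), by positivity, fun Z hZ hXZ => ?_⟩
  have hZX : Z ⊆ X := fun z hz => hN z fun u =>
    (exists_agree_of_deltaH_lt hmin.1.1 hXZ (hZ.1.2.2.2 u z hz)).imp
      fun _ hx => ⟨hx.1, hx.2.symm⟩
  exact hmin.2 Z ⟨hZ.1.1, hZX, hZ.1.2.2.1, hZ.1.2.2.2⟩

end Isolated

theorem transitive_type_zero_isolated_iff_general
    (d : ℕ) (X : Set (Config d))
    (htype : ∀ Z : Set (Config d), ¬ IsMaximalSubsystem Z X) :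
    IsolatedIn {Y : Set (Config d) | IsTransitive Y} X ↔
      IsMinimalShift X ∧ IsSFT X := by
  refine ⟨fun hiso => ?_, fun ⟨hmin, hsft⟩ => hmin.isolatedIn hsft⟩
  have hmin := hiso.isMinimalShift htype
  exact ⟨hmin, hiso.isSFT hmin⟩

/-- A transitive shift of maximality type 0 is isolated in the space `T^d`
of transitive shifts iff it is a minimal shift of finite type. -/
theorem transitive_type_zero_isolated_iff
    (d : ℕ) (hd : 1 ≤ d) (X : Set (Config d)) (hX : IsTransitive X)
    (htype : ∀ Z : Set (Config d), ¬ IsMaximalSubsystem Z X) :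
    IsolatedIn {Y : Set (Config d) | IsTransitive Y} X ↔
      IsMinimalShift X ∧ IsSFT X :=
  transitive_type_zero_isolated_iff_general d X htype
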